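/- arXiv:1008.3145 — 8 statements merged into one kernel-verified Lean document; each statement's English description precedes it below -/
import Mathlib

section
/- Suppose α is infinite and the cardinality of the set of symbols of L is at most the cardinality of α. Let p be a set of L-formulas, each with free variables among x₁,…,xₙ, and suppose there exist a model of T and an n-tuple of its elements realizing every formula of p. Then there exist a model M ∈ X_T and a tuple a⃗ from the carrier of M such that M ⊨ φ(a⃗) for every φ ∈ p (i.e., every satisfiable type over T is realized in the saturated set X_T of small models). -/
open FirstOrder FirstOrder.Language Set Topology

universe u v w x

variable {L : FirstOrder.Language.{u, v}} {α : Type w}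

/-- A model of `T` whose carrier is a subset of `α`: an element of the set `X_T` of
small models of `T`. -/
structure SmallModel (L : FirstOrder.Language.{u, v}) (α : Type w) (T : L.Theory) where
  carrier : Set α
  struc : L.Structure carrier
  models : @FirstOrder.Language.Theory.Model L carrier struc T

/-- `M.Sat φ v` means that the formula `φ` is realized in the small model `M`
at the valuation `v`. -/
def SmallModel.Sat {T : L.Theory} (M : SmallModel L α T) {ι : Type*}
    (φ : L.Formula ι) (v : ι → M.carrier) : Prop :=
  letI := M.struc
  φ.Realize v

/-- The basic open set `⟨φ, b⟩ ⊆ X_T`. -/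
def XBasic {T : L.Theory} {n : ℕ} (φ : L.Formula (Fin n)) (b : Fin n → α) :
    Set (SmallModel L α T) :=
  {M | ∃ h : ∀ i, b i ∈ M.carrier, M.Sat φ fun i => ⟨b i, h i⟩}

/-- The logical topology on `X_T`, generated by the sets `⟨φ, b⟩`. -/
instance SmallModel.instTopologicalSpace {T : L.Theory} :
    TopologicalSpace (SmallModel L α T) :=
  TopologicalSpace.generateFrom
    {U | ∃ (n : ℕ) (φ : L.Formula (Fin n)) (b : Fin n → α), U = XBasic φ b}

/- Downward Löwenheim–Skolem: a realization of `p` in a large model of `T` can be cut down to an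
elementary substructure of size `#α` that still contains the realizing tuple; a model of size at most
`#α` is then copied onto a subset of `α` by transport of structure. -/

open Cardinal

namespace SmallModel

variable {N : Type x} [L.Structure N]

noncomputable def ofEmbedding (T : L.Theory) [N ⊨ T] (f : N ↪ α) : SmallModel L α T where
  carrier := range f
  struc := (Equiv.ofInjective f f.injective).inducedStructure (L := L)
  models :=
    letI := (Equiv.ofInjective f f.injective).inducedStructure (L := L)
    StrongHomClass.theory_model (Equiv.ofInjective f f.injective).inducedStructureEquiv (L := L)

theorem sat_ofEmbedding {T : L.Theory} [N ⊨ T] (f : N ↪ α) {ι : Type*} (φ : L.Formula ι)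
    (v : ι → N) :
    (ofEmbedding T f).Sat φ (fun i => ⟨f (v i), mem_range_self (f := f) (v i)⟩) ↔ φ.Realize v :=
  letI := (Equiv.ofInjective f f.injective).inducedStructure (L := L)
  StrongHomClass.realize_formula (Equiv.ofInjective f f.injective).inducedStructureEquiv (L := L) φ
    (v := v)

end SmallModel

theorem exists_smallModel_sat_of_lift_card_le {T : L.Theory} {N : Type x} [L.Structure N]
    [N ⊨ T] {ι : Type*} (p : Set (L.Formula ι)) (v : ι → N) (hv : ∀ φ ∈ p, φ.Realize v)
    (hN : lift.{w} #N ≤ lift.{x} #α) :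
    ∃ (M : SmallModel L α T) (v : ι → M.carrier), ∀ φ ∈ p, M.Sat φ v := by
  obtain ⟨f⟩ := lift_mk_le'.1 hN
  exact ⟨.ofEmbedding T f, _, fun φ hφ => (SmallModel.sat_ofEmbedding f φ v).2 (hv φ hφ)⟩

/-- **Every satisfiable type over `T` is realized in the saturated set `X_T` of small
models**: if `α` is infinite, the language has at most `|α|` many symbols, and the set `p`
of formulas in the variables `x₁, …, xₙ` is realized by some tuple in some model of `T`,
then it is realized by a tuple in a model belonging to `X_T`. -/
theorem realized_in_small_models [Infinite α]
    (hcard : Cardinal.lift.{w} L.card ≤ Cardinal.lift.{max u v} (Cardinal.mk α))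
    {T : L.Theory} {n : ℕ} (p : Set (L.Formula (Fin n)))
    (hsat : ∃ (M : Type x) (S : L.Structure M), @FirstOrder.Language.Theory.Model L M S T ∧
      ∃ vM : Fin n → M, ∀ φ ∈ p, @FirstOrder.Language.Formula.Realize L M S (Fin n) φ vM) :
    ∃ (M : SmallModel L α T) (v : Fin n → M.carrier), ∀ φ ∈ p, M.Sat φ v := by
  obtain ⟨M, _, _, vM, hvM⟩ := hsat
  rcases le_or_gt (lift.{w} #M) (lift.{x} #α) with hsmall | hlarge
  · exact exists_smallModel_sat_of_lift_card_le p vM hvM hsmall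
  have hrange : lift.{w} #(range vM) ≤ lift.{x} #α :=
    (lift_le_aleph0.2 (lt_aleph0_of_finite _).le).trans (aleph0_le_lift.2 (aleph0_le_mk α))
  obtain ⟨E, hvE, hE⟩ := exists_elementarySubstructure_card_eq L (range vM) #α
    (aleph0_le_mk α) hrange hcard hlarge.le
  let vE : Fin n → E := fun i => ⟨vM i, hvE (mem_range_self i)⟩
  exact exists_smallModel_sat_of_lift_card_le p vE
    (fun φ hφ => (E.subtype.map_formula φ vE).1 (hvM φ hφ)) hE.le
end

section
/- For every L-formula φ with n free variables, the projection π₁ : ⟦φ⟧ → X_T, (M, a⃗) ↦ M, is a local homeomorphism with respect to the logical topologies: it is continuous and open, and every point of ⟦φ⟧ has an open neighborhood which π₁ maps homeomorphically onto an open subset of X_T. -/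
open FirstOrder FirstOrder.Language Set Topology

universe u v w x

variable {L : FirstOrder.Language.{u, v}} {α : Type w}

/-- A point of the sheaf `⟦φ⟧`: a model `M ∈ X_T` together with a tuple from its carrier
realizing `φ`. -/
structure SheafPt {L : FirstOrder.Language.{u, v}} {α : Type w} (T : L.Theory)
    {n : ℕ} (φ : L.Formula (Fin n)) where
  model : SmallModel L α T
  elem : Fin n → model.carrier
  sat : model.Sat φ elem

/-- The basic open set `⟨ψ, b⟩ ⊆ ⟦φ⟧`. -/
def sheafBasic {T : L.Theory} {n : ℕ} (φ : L.Formula (Fin n)) {m : ℕ}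
    (ψ : L.Formula (Fin n ⊕ Fin m)) (b : Fin m → α) :
    Set (SheafPt (α := α) T φ) :=
  {p | ∃ h : ∀ i, b i ∈ p.model.carrier,
        p.model.Sat ψ (Sum.elim p.elem fun i => ⟨b i, h i⟩)}

/-- The logical topology on `⟦φ⟧`, generated by the sets `⟨ψ, b⟩`. -/
instance SheafPt.instTopologicalSpace {T : L.Theory} {n : ℕ} (φ : L.Formula (Fin n)) :
    TopologicalSpace (SheafPt (α := α) T φ) :=
  TopologicalSpace.generateFrom
    {U | ∃ (m : ℕ) (ψ : L.Formula (Fin n ⊕ Fin m)) (b : Fin m → α), U = sheafBasic φ ψ b}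

/-!
Over the basic open set `⟨φ, b⟩` the tuple `b` itself is a section `M ↦ (M, b)` of `π₁`. It is
continuous, since it pulls `⟨ψ, c⟩` back to `⟨ψ, b c⟩`, and its image is the open set
`⟨x = b, b⟩ ⊆ ⟦φ⟧`, on which `π₁` is its inverse. These sets cover `⟦φ⟧`, so `π₁` is a local
homeomorphism, hence continuous and open.
-/

theorem isOpen_xBasic {T : L.Theory} {n : ℕ} (φ : L.Formula (Fin n)) (b : Fin n → α) :
    IsOpen (XBasic (T := T) φ b) :=
  TopologicalSpace.isOpen_generateFrom_of_mem ⟨n, φ, b, rfl⟩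

namespace SmallModel

variable {T : L.Theory}

/-- `XBasic` with parameters indexed by an arbitrary type, so that parameter tuples can be
concatenated with `Sum.elim`. -/
def satSet {ι : Type*} (ψ : L.Formula ι) (b : ι → α) : Set (SmallModel L α T) :=
  {M | ∃ h : ∀ i, b i ∈ M.carrier, M.Sat ψ fun i => ⟨b i, h i⟩}

theorem satSet_relabel_equiv {ι κ : Type*} (ψ : L.Formula ι) (e : ι ≃ κ) (b : ι → α) :
    satSet (T := T) (ψ.relabel e) (b ∘ e.symm) = satSet ψ b := by
  ext M
  let := M.struc
  simp only [satSet, SmallModel.Sat, mem_ofPred_eq, Formula.realize_relabel]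
  constructor
  · rintro ⟨h, hψ⟩
    exact ⟨fun i => by simpa using h (e i), by convert hψ using 2; simp⟩
  · rintro ⟨h, hψ⟩
    exact ⟨fun k => h (e.symm k), by convert hψ using 2; simp⟩

theorem isOpen_satSet {ι : Type*} [Finite ι] (ψ : L.Formula ι) (b : ι → α) :
    IsOpen (satSet (T := T) ψ b) := by
  obtain ⟨k, ⟨e⟩⟩ := Finite.exists_equiv_fin ι
  rw [← satSet_relabel_equiv ψ e b]
  exact isOpen_xBasic _ _

end SmallModel

noncomputable def FirstOrder.Language.Formula.eqTuples (L : FirstOrder.Language.{u, v}) (n : ℕ) :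
    L.Formula (Fin n ⊕ Fin n) :=
  Formula.iInf fun i => (Term.var (Sum.inl i)).equal (Term.var (Sum.inr i))

namespace SheafPt

variable {T : L.Theory} {n : ℕ} {φ : L.Formula (Fin n)}

theorem preimage_model_xBasic {m : ℕ} (ψ : L.Formula (Fin m)) (b : Fin m → α) :
    (model : SheafPt (α := α) T φ → SmallModel L α T) ⁻¹' XBasic ψ b =
      sheafBasic φ (ψ.relabel Sum.inr) b := by
  ext p
  let := p.model.struc
  simp only [mem_preimage, XBasic, sheafBasic, SmallModel.Sat, mem_ofPred_eq,
    Formula.realize_relabel]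
  rfl

theorem continuous_model : Continuous (model : SheafPt (α := α) T φ → SmallModel L α T) := by
  refine continuous_generateFrom_iff.2 ?_
  rintro _ ⟨m, ψ, b, rfl⟩
  exact TopologicalSpace.isOpen_generateFrom_of_mem ⟨m, _, b, preimage_model_xBasic ψ b⟩

theorem mem_sheafBasic_eqTuples {q : SheafPt (α := α) T φ} {b : Fin n → α} :
    q ∈ sheafBasic φ (Formula.eqTuples L n) b ↔ ∀ i, (q.elem i : α) = b i := by
  let := q.model.struc
  simp only [sheafBasic, SmallModel.Sat, mem_ofPred_eq, Formula.eqTuples, Formula.realize_iInf,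
    Formula.realize_equal, Term.realize_var, Sum.elim_inl, Sum.elim_inr, Subtype.ext_iff]
  exact ⟨fun ⟨_, h⟩ => h, fun h => ⟨fun i => h i ▸ (q.elem i).2, h⟩⟩

theorem isOpen_sheafBasic_eqTuples (b : Fin n → α) :
    IsOpen (sheafBasic (T := T) φ (Formula.eqTuples L n) b) :=
  TopologicalSpace.isOpen_generateFrom_of_mem ⟨n, _, b, rfl⟩

def ofTuple (b : Fin n → α) (M : XBasic (T := T) φ b) : SheafPt (α := α) T φ :=
  ⟨M.1, fun i => ⟨b i, M.2.1 i⟩, M.2.2⟩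

theorem ofTuple_mem_sheafBasic_eqTuples (b : Fin n → α) (M : XBasic (T := T) φ b) :
    ofTuple b M ∈ sheafBasic φ (Formula.eqTuples L n) b :=
  mem_sheafBasic_eqTuples.2 fun _ => rfl

theorem model_mem_xBasic {q : SheafPt (α := α) T φ} {b : Fin n → α}
    (hq : q ∈ sheafBasic φ (Formula.eqTuples L n) b) : q.model ∈ XBasic φ b := by
  obtain ⟨M, a, hφ⟩ := q
  obtain rfl : (fun i => (a i : α)) = b := funext (mem_sheafBasic_eqTuples.1 hq)
  exact ⟨fun i => (a i).2, hφ⟩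

theorem ofTuple_model {q : SheafPt (α := α) T φ} {b : Fin n → α}
    (hq : q ∈ sheafBasic φ (Formula.eqTuples L n) b) :
    ofTuple b ⟨q.model, model_mem_xBasic hq⟩ = q := by
  obtain ⟨M, a, hφ⟩ := q
  obtain rfl : (fun i => (a i : α)) = b := funext (mem_sheafBasic_eqTuples.1 hq)
  rfl

theorem preimage_ofTuple_sheafBasic (b : Fin n → α) {m : ℕ} (ψ : L.Formula (Fin n ⊕ Fin m))
    (c : Fin m → α) :
    ofTuple (T := T) b ⁻¹' sheafBasic φ ψ c =
      Subtype.val ⁻¹' SmallModel.satSet ψ (Sum.elim b c) := by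
  ext ⟨M, hM⟩
  let := M.struc
  simp only [mem_preimage, sheafBasic, SmallModel.satSet, SmallModel.Sat, mem_ofPred_eq, ofTuple]
  constructor
  · rintro ⟨hc, hψ⟩
    refine ⟨Sum.rec hM.1 hc, ?_⟩
    convert hψ using 2 with x
    cases x <;> rfl
  · rintro ⟨hbc, hψ⟩
    refine ⟨fun j => hbc (Sum.inr j), ?_⟩
    convert hψ using 2 with x
    cases x <;> rfl

theorem continuous_ofTuple (b : Fin n → α) : Continuous (ofTuple (T := T) (φ := φ) b) := by
  refine continuous_generateFrom_iff.2 ?_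
  rintro _ ⟨m, ψ, c, rfl⟩
  rw [preimage_ofTuple_sheafBasic]
  exact (SmallModel.isOpen_satSet ψ _).preimage continuous_subtype_val

def homeomorphXBasic (b : Fin n → α) :
    sheafBasic (T := T) φ (Formula.eqTuples L n) b ≃ₜ XBasic (T := T) φ b where
  toFun q := ⟨q.1.model, model_mem_xBasic q.2⟩
  invFun M := ⟨ofTuple b M, ofTuple_mem_sheafBasic_eqTuples b M⟩
  left_inv q := Subtype.ext (ofTuple_model q.2)
  right_inv _ := rfl
  continuous_toFun := (continuous_model.comp continuous_subtype_val).subtype_mk _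
  continuous_invFun := (continuous_ofTuple b).subtype_mk _

theorem isOpenEmbedding_domRestrict_model (b : Fin n → α) :
    IsOpenEmbedding ((sheafBasic (T := T) φ (Formula.eqTuples L n) b).domRestrict model) :=
  (isOpen_xBasic φ b).isOpenEmbedding_subtypeVal.comp (homeomorphXBasic b).isOpenEmbedding

end SheafPt

/-- **The projection `π₁ : ⟦φ⟧ → X_T` is a local homeomorphism** with respect to the
logical topologies: it is continuous and open, and every point of `⟦φ⟧` has an open
neighborhood mapped homeomorphically onto an open subset of `X_T`. -/
theorem pi1_isLocalHomeomorph {T : L.Theory} {n : ℕ} (φ : L.Formula (Fin n)) :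
    Continuous (SheafPt.model : SheafPt (α := α) T φ → SmallModel L α T) ∧
      IsOpenMap (SheafPt.model : SheafPt (α := α) T φ → SmallModel L α T) ∧
      IsLocalHomeomorph (SheafPt.model : SheafPt (α := α) T φ → SmallModel L α T) := by
  have h : IsLocalHomeomorph (SheafPt.model : SheafPt (α := α) T φ → SmallModel L α T) :=
    isLocalHomeomorph_iff_isOpenEmbedding_restrict.2 fun p =>
      ⟨_, (SheafPt.isOpen_sheafBasic_eqTuples fun i => (p.elem i : α)).mem_nhds
        (SheafPt.mem_sheafBasic_eqTuples.2 fun _ => rfl),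
        SheafPt.isOpenEmbedding_domRestrict_model _⟩
  exact ⟨h.continuous, h.isOpenMap, h⟩
end

section
/- Let φ, ψ, σ be L-formulas with n, m, and n+m free variables respectively, and suppose every model of T satisfies ∀x⃗∀y⃗ (σ(x⃗,y⃗) → φ(x⃗) ∧ ψ(y⃗)), ∀x⃗ (φ(x⃗) → ∃y⃗ σ(x⃗,y⃗)), and ∀x⃗∀y⃗∀z⃗ (σ(x⃗,y⃗) ∧ σ(x⃗,z⃗) → y⃗ = z⃗) (σ is a T-provably functional relation from φ to ψ). Then the induced map f_σ : ⟦φ⟧ → ⟦ψ⟧, sending (M, a⃗) to (M, b⃗) for the unique b⃗ with M ⊨ σ(a⃗, b⃗), is continuous; moreover it commutes with the actions: f_σ(θ_φ(f, p)) = θ_ψ(f, f_σ(p)) for every composable pair. -/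
open FirstOrder FirstOrder.Language Set Topology

universe u v w x

variable {L : FirstOrder.Language.{u, v}} {α : Type w}

/-- Isomorphisms of `L`-structures between two small models. -/
abbrev StrEquiv {T : L.Theory} (A B : SmallModel L α T) : Type _ :=
  @FirstOrder.Language.Equiv L A.carrier B.carrier A.struc B.struc

/-- The underlying function of an isomorphism of small models. -/
def StrEquiv.fn {T : L.Theory} {A B : SmallModel L α T} (f : StrEquiv A B) :
    A.carrier → B.carrier :=
  (@FirstOrder.Language.Equiv.toEquiv L A.carrier B.carrier A.struc B.struc f)

/-- Composition of isomorphisms of small models. -/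
def StrEquiv.comp {T : L.Theory} {A B C : SmallModel L α T}
    (g : StrEquiv B C) (f : StrEquiv A B) : StrEquiv A C :=
  letI := A.struc; letI := B.struc; letI := C.struc
  FirstOrder.Language.Equiv.comp g f

/-- An element of `G_T`: a triple `(M, N, f)` with `M, N ∈ X_T` and `f : M ≅ N` an
isomorphism of `L`-structures. -/
structure ModelIso (L : FirstOrder.Language.{u, v}) (α : Type w) (T : L.Theory) where
  src : SmallModel L α T
  tgt : SmallModel L α T
  iso : StrEquiv src tgt

/-- The basic open set `⟨a ↦ b⟩ ⊆ G_T`. -/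
def GMapsTo {T : L.Theory} (a b : α) : Set (ModelIso L α T) :=
  {g | ∃ h : a ∈ g.src.carrier, (StrEquiv.fn g.iso ⟨a, h⟩ : α) = b}

/-- The logical topology on `G_T`, generated by the sets `s⁻¹⟨φ, b⟩`, `t⁻¹⟨φ, b⟩` and
`⟨a ↦ b⟩`. -/
instance ModelIso.instTopologicalSpace {T : L.Theory} :
    TopologicalSpace (ModelIso L α T) :=
  TopologicalSpace.generateFrom
    ({U | ∃ (n : ℕ) (φ : L.Formula (Fin n)) (b : Fin n → α),
        U = ModelIso.src ⁻¹' XBasic φ b} ∪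
     {U | ∃ (n : ℕ) (φ : L.Formula (Fin n)) (b : Fin n → α),
        U = ModelIso.tgt ⁻¹' XBasic φ b} ∪
     {U | ∃ a b : α, U = GMapsTo (T := T) a b})

/-- The identity arrow of `G_T` at a model `M`. -/
def ModelIso.idIso {T : L.Theory} (M : SmallModel L α T) : ModelIso L α T :=
  ⟨M, M, letI := M.struc; FirstOrder.Language.Equiv.refl L M.carrier⟩

/-- The inverse of an arrow of `G_T`. -/
def ModelIso.invIso {T : L.Theory} (g : ModelIso L α T) : ModelIso L α T :=
  ⟨g.tgt, g.src, letI := g.src.struc; letI := g.tgt.struc;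
    FirstOrder.Language.Equiv.symm g.iso⟩

/-- An element of `G_T ×_{X_T} ⟦φ⟧`: an arrow `(M,N,f)` of `G_T` together with a point
`(M, a⃗)` of `⟦φ⟧` lying over its source. -/
structure ActionPt {L : FirstOrder.Language.{u, v}} {α : Type w} (T : L.Theory)
    {n : ℕ} (φ : L.Formula (Fin n)) where
  g : ModelIso L α T
  elem : Fin n → g.src.carrier
  sat : g.src.Sat φ elem

/-- The point of `⟦φ⟧` over the source of the arrow. -/
def ActionPt.pt {T : L.Theory} {n : ℕ} {φ : L.Formula (Fin n)}
    (q : ActionPt (α := α) T φ) : SheafPt (α := α) T φ :=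
  ⟨q.g.src, q.elem, q.sat⟩

/-- `G_T ×_{X_T} ⟦φ⟧` is topologized as a subspace of the product `G_T × ⟦φ⟧`. -/
instance ActionPt.instTopologicalSpace {T : L.Theory} {n : ℕ} {φ : L.Formula (Fin n)} :
    TopologicalSpace (ActionPt (α := α) T φ) :=
  TopologicalSpace.induced (fun q => (q.g, q.pt)) inferInstance

/-- The action `θ_φ : G_T ×_{X_T} ⟦φ⟧ → ⟦φ⟧`, `θ_φ((M,N,f), (M, a⃗)) = (N, f(a⃗))`. -/
def theta {T : L.Theory} {n : ℕ} (φ : L.Formula (Fin n))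
    (q : ActionPt (α := α) T φ) : SheafPt (α := α) T φ where
  model := q.g.tgt
  elem := fun i => StrEquiv.fn q.g.iso (q.elem i)
  sat := by
    letI := q.g.src.struc
    letI := q.g.tgt.struc
    have h := q.sat
    have heq : (fun i => StrEquiv.fn q.g.iso (q.elem i)) = ⇑q.g.iso ∘ q.elem := rfl
    show Formula.Realize (M := q.g.tgt.carrier) φ _
    rw [heq]
    exact (StrongHomClass.realize_formula q.g.iso φ).mpr h

/-! The preimage under `f_σ` of a basic open set `⟨χ, b⃗⟩` of `⟦ψ⟧` is the basic open set
`⟨∃ y⃗, σ(x⃗, y⃗) ∧ χ(y⃗, z⃗), b⃗⟩` of `⟦φ⟧`, since `σ` is functional. Isomorphisms preserve `σ`,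
so `θ_ψ(f, f_σ(p))` is `σ`-related to `θ_φ(f, p)`, and a point has at most one `σ`-related
point. Functionality is assumed in models of universe `max u v w`; a small model is
transported there along `ULift`. -/

namespace FirstOrder.Language.Formula

variable {M : Type*} [L.Structure M] {ι κ μ : Type*} [Finite κ]

noncomputable def relComp (σ : L.Formula (ι ⊕ κ)) (ψ : L.Formula (κ ⊕ μ)) :
    L.Formula (ι ⊕ μ) :=
  iExs κ (σ.relabel (Sum.elim (Sum.inl ∘ Sum.inl) Sum.inr) ⊓
    ψ.relabel (Sum.elim Sum.inr (Sum.inl ∘ Sum.inr)))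

theorem realize_relComp (σ : L.Formula (ι ⊕ κ)) (ψ : L.Formula (κ ⊕ μ)) (x : ι → M)
    (z : μ → M) : (σ.relComp ψ).Realize (Sum.elim x z) ↔
      ∃ y : κ → M, σ.Realize (Sum.elim x y) ∧ ψ.Realize (Sum.elim y z) := by
  simp only [relComp, realize_iExs, realize_inf, realize_relabel, Sum.comp_elim,
    ← Function.comp_assoc, Sum.elim_comp_inl, Sum.elim_comp_inr]

end FirstOrder.Language.Formula

namespace SmallModel

variable {T : L.Theory}

instance (M : SmallModel L α T) : L.Structure M.carrier := M.struc

instance (M : SmallModel L α T) : M.carrier ⊨ T := M.models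

theorem sat_iff_realize (M : SmallModel L α T) {ι : Type*} (θ : L.Formula ι)
    (v : ι → M.carrier) : M.Sat θ v ↔ θ.Realize v := Iff.rfl

def ULiftCarrier (M : SmallModel L α T) : Type (max u v w) :=
  ULift.{max u v} M.carrier

instance (M : SmallModel L α T) : L.Structure M.ULiftCarrier :=
  (Equiv.ulift.symm : M.carrier ≃ ULift.{max u v} M.carrier).inducedStructure

def ulift (M : SmallModel L α T) : M.carrier ≃[L] M.ULiftCarrier :=
  Equiv.inducedStructureEquiv _

instance (M : SmallModel L α T) : M.ULiftCarrier ⊨ T :=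
  StrongHomClass.theory_model M.ulift

end SmallModel

def IsFunctionalRel (T : L.Theory) (α : Type w) {ι κ : Type*} (σ : L.Formula (ι ⊕ κ)) :
    Prop :=
  ∀ (M : SmallModel L α T) (v : ι → M.carrier) (w w' : κ → M.carrier),
    M.Sat σ (Sum.elim v w) → M.Sat σ (Sum.elim v w') → w = w'

theorem IsFunctionalRel.of_forall_model {T : L.Theory} {ι κ : Type*}
    {σ : L.Formula (ι ⊕ κ)}
    (hσ : ∀ (N : Type (max u v w)) [L.Structure N] [N ⊨ T] (v : ι → N) (w w' : κ → N),
      σ.Realize (Sum.elim v w) → σ.Realize (Sum.elim v w') → w = w') :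
    IsFunctionalRel T α σ := by
  intro M v w w' hw hw'
  have hlift : ∀ w : κ → M.carrier, M.Sat σ (Sum.elim v w) →
      σ.Realize (Sum.elim (M.ulift ∘ v) (M.ulift ∘ w)) := fun w hw => by
    rwa [← Sum.comp_elim, StrongHomClass.realize_formula]
  exact (M.ulift.injective.comp_left :) (hσ _ _ _ _ (hlift w hw) (hlift w' hw'))

section RelatedBy

variable {T : L.Theory} {n m : ℕ} {φ : L.Formula (Fin n)} {ψ : L.Formula (Fin m)}
  {σ : L.Formula (Fin n ⊕ Fin m)}

def SheafPt.RelatedBy (σ : L.Formula (Fin n ⊕ Fin m)) (p : SheafPt (α := α) T φ)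
    (r : SheafPt (α := α) T ψ) : Prop :=
  r.model = p.model ∧ ∃ hmem : ∀ i, (r.elem i : α) ∈ p.model.carrier,
    p.model.Sat σ (Sum.elim p.elem fun i => ⟨r.elem i, hmem i⟩)

namespace SheafPt

theorem relatedBy_mk_iff (p : SheafPt (α := α) T φ) (w : Fin m → p.model.carrier)
    (hw : p.model.Sat ψ w) :
    RelatedBy σ p ⟨p.model, w, hw⟩ ↔ p.model.Sat σ (Sum.elim p.elem w) :=
  ⟨fun ⟨_, _, h⟩ => h, fun h => ⟨rfl, fun i => (w i).2, h⟩⟩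

theorem RelatedBy.unique (hσ : IsFunctionalRel T α σ) {p : SheafPt (α := α) T φ}
    {r r' : SheafPt (α := α) T ψ} (h : RelatedBy σ p r) (h' : RelatedBy σ p r') :
    r = r' := by
  obtain ⟨M, w, hw⟩ := r
  obtain ⟨M', w', hw'⟩ := r'
  obtain rfl : M = p.model := h.1
  obtain rfl : M' = p.model := h'.1
  rw [relatedBy_mk_iff] at h h'
  obtain rfl := hσ _ _ _ _ h h'
  rfl

theorem RelatedBy.mem_sheafBasic_iff (hσ : IsFunctionalRel T α σ)
    {p : SheafPt (α := α) T φ} {r : SheafPt (α := α) T ψ} (h : RelatedBy σ p r) {k : ℕ}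
    {χ : L.Formula (Fin m ⊕ Fin k)} {b : Fin k → α} :
    r ∈ sheafBasic ψ χ b ↔ p ∈ sheafBasic φ (σ.relComp χ) b := by
  obtain ⟨M, w, hw⟩ := r
  obtain rfl : M = p.model := h.1
  rw [relatedBy_mk_iff] at h
  refine exists_congr fun hb => ?_
  simp only [SmallModel.sat_iff_realize, Formula.realize_relComp]
  refine ⟨fun hχ => ⟨w, h, hχ⟩, ?_⟩
  rintro ⟨w', hw', hχ⟩
  rwa [hσ _ _ _ _ h hw']

theorem RelatedBy.theta {q : ActionPt (α := α) T φ} {q' : ActionPt (α := α) T ψ}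
    (hg : q'.g = q.g) (h : RelatedBy σ q.pt q'.pt) :
    RelatedBy σ (_root_.theta φ q) (_root_.theta ψ q') := by
  obtain ⟨g, w, hw⟩ := q'
  obtain rfl : g = q.g := hg
  refine (relatedBy_mk_iff (_root_.theta φ q) _ _).2 ?_
  have hsrc : q.g.src.Sat σ (Sum.elim q.elem w) := (relatedBy_mk_iff q.pt w hw).1 h
  have htgt := (StrongHomClass.realize_formula q.g.iso σ).2 hsrc
  rwa [Sum.comp_elim] at htgt

end SheafPt

end RelatedBy

theorem continuous_of_relatedBy {T : L.Theory} {n m : ℕ} {φ : L.Formula (Fin n)}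
    {ψ : L.Formula (Fin m)} {σ : L.Formula (Fin n ⊕ Fin m)} (hσ : IsFunctionalRel T α σ)
    {F : SheafPt (α := α) T φ → SheafPt (α := α) T ψ}
    (hF : ∀ p, SheafPt.RelatedBy σ p (F p)) : Continuous F := by
  rw [continuous_generateFrom_iff]
  rintro _ ⟨k, χ, b, rfl⟩
  have hpre : F ⁻¹' sheafBasic ψ χ b = sheafBasic φ (σ.relComp χ) b :=
    Set.ext fun p => (hF p).mem_sheafBasic_iff hσ
  rw [hpre]
  exact TopologicalSpace.isOpen_generateFrom_of_mem ⟨k, _, b, rfl⟩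

theorem functional_relation_induces_continuous_equivariant_map_general
    {T : L.Theory} {n m : ℕ} (φ : L.Formula (Fin n)) (ψ : L.Formula (Fin m))
    (σ : L.Formula (Fin n ⊕ Fin m))
    (h3 : ∀ (M : Type (max u v w)) [L.Structure M] [@FirstOrder.Language.Theory.Model L M
        inferInstance T] (vM : Fin n → M) (wM wM' : Fin m → M),
      σ.Realize (Sum.elim vM wM) → σ.Realize (Sum.elim vM wM') → wM = wM')
    (F : SheafPt (α := α) T φ → SheafPt (α := α) T ψ)
    (hF : ∀ p : SheafPt (α := α) T φ, (F p).model = p.model ∧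
      ∃ hmem : ∀ i, ((F p).elem i : α) ∈ p.model.carrier,
        p.model.Sat σ (Sum.elim p.elem fun i => ⟨((F p).elem i : α), hmem i⟩)) :
    Continuous F ∧
      ∀ (q : ActionPt (α := α) T φ) (q' : ActionPt (α := α) T ψ),
        q'.g = q.g → q'.pt = F q.pt → F (theta φ q) = theta ψ q' := by
  have hσ : IsFunctionalRel T α σ := .of_forall_model h3
  refine ⟨continuous_of_relatedBy hσ hF, fun q q' hg hpt => ?_⟩
  exact SheafPt.RelatedBy.unique hσ (hF (theta φ q))
    (SheafPt.RelatedBy.theta hg (hpt ▸ hF q.pt))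

/-- **A `T`-provably functional relation `σ` from `φ` to `ψ` induces a continuous,
equivariant map `f_σ : ⟦φ⟧ → ⟦ψ⟧`**, sending `(M, a⃗)` to `(M, b⃗)` for the unique `b⃗`
with `M ⊨ σ(a⃗, b⃗)`. -/
theorem functional_relation_induces_continuous_equivariant_map
    {T : L.Theory} {n m : ℕ} (φ : L.Formula (Fin n)) (ψ : L.Formula (Fin m))
    (σ : L.Formula (Fin n ⊕ Fin m))
    (h1 : ∀ (M : Type (max u v w)) [L.Structure M] [@FirstOrder.Language.Theory.Model L M
        inferInstance T] (vM : Fin n → M) (wM : Fin m → M),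
      σ.Realize (Sum.elim vM wM) → φ.Realize vM ∧ ψ.Realize wM)
    (h2 : ∀ (M : Type (max u v w)) [L.Structure M] [@FirstOrder.Language.Theory.Model L M
        inferInstance T] (vM : Fin n → M),
      φ.Realize vM → ∃ wM : Fin m → M, σ.Realize (Sum.elim vM wM))
    (h3 : ∀ (M : Type (max u v w)) [L.Structure M] [@FirstOrder.Language.Theory.Model L M
        inferInstance T] (vM : Fin n → M) (wM wM' : Fin m → M),
      σ.Realize (Sum.elim vM wM) → σ.Realize (Sum.elim vM wM') → wM = wM')
    (F : SheafPt (α := α) T φ → SheafPt (α := α) T ψ)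
    (hF : ∀ p : SheafPt (α := α) T φ, (F p).model = p.model ∧
      ∃ hmem : ∀ i, ((F p).elem i : α) ∈ p.model.carrier,
        p.model.Sat σ (Sum.elim p.elem fun i => ⟨((F p).elem i : α), hmem i⟩)) :
    Continuous F ∧
      ∀ (q : ActionPt (α := α) T φ) (q' : ActionPt (α := α) T ψ),
        q'.g = q.g → q'.pt = F q.pt → F (theta φ q) = theta ψ q' :=
  functional_relation_induces_continuous_equivariant_map_general φ ψ σ h3 F hF
end

section
/- With the logical topologies on G_T and X_T, the groupoid of T-models and isomorphisms is a topological groupoid: the source map s, the target map t, the identity map X_T → G_T, M ↦ (M, M, id_M), the inversion map G_T → G_T, (M,N,f) ↦ (N,M,f⁻¹), and the composition map c : G_T ×_{X_T} G_T → G_T (defined on pairs ((N,P,g),(M,N,f)) with s(g) = t(f), topologized as a subspace of the product, by c(g, f) = (M,P, g∘f)) are all continuous. -/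
open FirstOrder FirstOrder.Language Set Topology

universe u v w x

variable {L : FirstOrder.Language.{u, v}} {α : Type w}

/-- A composable pair of arrows of `G_T`: a pair `((N,P,g), (M,N,f))` with `s(g) = t(f)`. -/
structure CompPair (L : FirstOrder.Language.{u, v}) (α : Type w) (T : L.Theory) where
  A : SmallModel L α T
  B : SmallModel L α T
  C : SmallModel L α T
  f : StrEquiv A B
  g : StrEquiv B C

/-- A composable pair as an element of `G_T × G_T`. -/
def CompPair.toPair {T : L.Theory} (c : CompPair L α T) :
    ModelIso L α T × ModelIso L α T :=
  ((⟨c.B, c.C, c.g⟩ : ModelIso L α T), (⟨c.A, c.B, c.f⟩ : ModelIso L α T))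

/-- `G_T ×_{X_T} G_T` is topologized as a subspace of the product `G_T × G_T`. -/
instance CompPair.instTopologicalSpace {T : L.Theory} :
    TopologicalSpace (CompPair L α T) :=
  TopologicalSpace.induced CompPair.toPair inferInstance

/-- The composition map `c : G_T ×_{X_T} G_T → G_T`. -/
def CompPair.comp {T : L.Theory} (c : CompPair L α T) : ModelIso L α T :=
  ⟨c.A, c.C, StrEquiv.comp c.g c.f⟩


section AuxLemmas

variable {T : L.Theory}

lemma isOpen_XBasic {n : ℕ} (φ : L.Formula (Fin n)) (b : Fin n → α) :
    IsOpen (XBasic (T := T) φ b) :=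
  TopologicalSpace.isOpen_generateFrom_of_mem ⟨n, φ, b, rfl⟩

lemma isOpen_src_preimage {n : ℕ} (φ : L.Formula (Fin n)) (b : Fin n → α) :
    IsOpen (ModelIso.src ⁻¹' XBasic (T := T) φ b) :=
  TopologicalSpace.isOpen_generateFrom_of_mem (Or.inl (Or.inl ⟨n, φ, b, rfl⟩))

lemma isOpen_tgt_preimage {n : ℕ} (φ : L.Formula (Fin n)) (b : Fin n → α) :
    IsOpen (ModelIso.tgt ⁻¹' XBasic (T := T) φ b) :=
  TopologicalSpace.isOpen_generateFrom_of_mem (Or.inl (Or.inr ⟨n, φ, b, rfl⟩))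

lemma isOpen_GMapsTo (a b : α) : IsOpen (GMapsTo (T := T) a b) :=
  TopologicalSpace.isOpen_generateFrom_of_mem (Or.inr ⟨a, b, rfl⟩)

lemma idIso_preimage_GMapsTo_self (a : α) :
    ModelIso.idIso ⁻¹' GMapsTo (T := T) a a = XBasic (⊤ : L.Formula (Fin 1)) (fun _ => a) := by
  ext M
  simp only [mem_preimage, GMapsTo, XBasic, mem_setOf_eq]
  constructor
  · rintro ⟨h, -⟩
    refine ⟨fun _ => h, ?_⟩
    letI := M.struc
    exact FirstOrder.Language.Formula.realize_top.2 trivial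
  · rintro ⟨h, -⟩
    exact ⟨h 0, rfl⟩

lemma idIso_preimage_GMapsTo_ne {a b : α} (hab : a ≠ b) :
    ModelIso.idIso ⁻¹' GMapsTo (T := T) a b = ∅ := by
  ext M
  simp only [mem_preimage, GMapsTo, mem_setOf_eq, mem_empty_iff_false, iff_false]
  rintro ⟨h, e⟩
  exact hab e

lemma invIso_preimage_GMapsTo (a b : α) :
    ModelIso.invIso ⁻¹' GMapsTo (T := T) a b = GMapsTo b a := by
  ext g
  simp only [mem_preimage, GMapsTo, mem_setOf_eq]
  constructor
  · rintro ⟨h, e⟩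
    -- h : a ∈ g.tgt.carrier, e : ↑(g.iso.toEquiv.symm ⟨a, h⟩) = b
    subst e
    letI := g.src.struc; letI := g.tgt.struc
    refine ⟨(g.iso.toEquiv.symm ⟨a, h⟩).2, ?_⟩
    have : (⟨(g.iso.toEquiv.symm ⟨a, h⟩ : g.src.carrier), (g.iso.toEquiv.symm ⟨a, h⟩).2⟩ :
        g.src.carrier) = g.iso.toEquiv.symm ⟨a, h⟩ := Subtype.ext rfl
    show ((g.iso.toEquiv ⟨(g.iso.toEquiv.symm ⟨a, h⟩ : g.src.carrier),
        (g.iso.toEquiv.symm ⟨a, h⟩).2⟩ : g.tgt.carrier) : α) = a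
    rw [this, g.iso.toEquiv.apply_symm_apply]
  · rintro ⟨h, e⟩
    -- h : b ∈ g.src.carrier, e : ↑(g.iso.toEquiv ⟨b, h⟩) = a
    subst e
    letI := g.src.struc; letI := g.tgt.struc
    refine ⟨(g.iso.toEquiv ⟨b, h⟩).2, ?_⟩
    have : (⟨(g.iso.toEquiv ⟨b, h⟩ : g.tgt.carrier), (g.iso.toEquiv ⟨b, h⟩).2⟩ :
        g.tgt.carrier) = g.iso.toEquiv ⟨b, h⟩ := Subtype.ext rfl
    show ((g.iso.toEquiv.symm ⟨(g.iso.toEquiv ⟨b, h⟩ : g.tgt.carrier),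
        (g.iso.toEquiv ⟨b, h⟩).2⟩ : g.src.carrier) : α) = b
    rw [this, g.iso.toEquiv.symm_apply_apply]

lemma comp_preimage_GMapsTo (a b : α) :
    CompPair.comp ⁻¹' GMapsTo (T := T) a b =
      ⋃ x : α, CompPair.toPair ⁻¹' (GMapsTo x b ×ˢ GMapsTo a x) := by
  ext c
  simp only [mem_preimage, GMapsTo, mem_setOf_eq, mem_iUnion, mem_prod, CompPair.toPair,
    CompPair.comp]
  constructor
  · rintro ⟨h, e⟩
    -- h : a ∈ c.A.carrier, e : ↑(c.g (c.f ⟨a, h⟩)) = b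
    refine ⟨(StrEquiv.fn c.f ⟨a, h⟩ : α), ⟨(StrEquiv.fn c.f ⟨a, h⟩).2, ?_⟩, ⟨h, rfl⟩⟩
    have : (⟨(StrEquiv.fn c.f ⟨a, h⟩ : α), (StrEquiv.fn c.f ⟨a, h⟩).2⟩ : c.B.carrier) =
        StrEquiv.fn c.f ⟨a, h⟩ := Subtype.ext rfl
    show ((StrEquiv.fn c.g ⟨(StrEquiv.fn c.f ⟨a, h⟩ : α), (StrEquiv.fn c.f ⟨a, h⟩).2⟩ :
        c.C.carrier) : α) = b
    rw [this]
    exact e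
  · rintro ⟨x, ⟨hx, ex⟩, ⟨ha, ea⟩⟩
    refine ⟨ha, ?_⟩
    have : StrEquiv.fn c.f ⟨a, ha⟩ = ⟨x, hx⟩ := Subtype.ext ea
    show ((StrEquiv.fn c.g (StrEquiv.fn c.f ⟨a, ha⟩) : c.C.carrier) : α) = b
    rw [this]
    exact ex

end AuxLemmas

/-- **`G_T ⇉ X_T` is a topological groupoid** with respect to the logical topologies:
the source, target, identity, inversion and composition maps are all continuous. -/
theorem models_topological_groupoid {T : L.Theory} :
    Continuous (ModelIso.src : ModelIso L α T → SmallModel L α T) ∧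
      Continuous (ModelIso.tgt : ModelIso L α T → SmallModel L α T) ∧
      Continuous (ModelIso.idIso : SmallModel L α T → ModelIso L α T) ∧
      Continuous (ModelIso.invIso : ModelIso L α T → ModelIso L α T) ∧
      Continuous (CompPair.comp : CompPair L α T → ModelIso L α T) := by
  have htp : Continuous (CompPair.toPair : CompPair L α T → _) := continuous_induced_dom
  refine ⟨?_, ?_, ?_, ?_, ?_⟩
  · exact continuous_generateFrom_iff.mpr fun U ⟨n, φ, b, hU⟩ =>
      hU ▸ isOpen_src_preimage φ b
  · exact continuous_generateFrom_iff.mpr fun U ⟨n, φ, b, hU⟩ =>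
      hU ▸ isOpen_tgt_preimage φ b
  · refine continuous_generateFrom_iff.mpr ?_
    rintro U ((⟨n, φ, b, rfl⟩ | ⟨n, φ, b, rfl⟩) | ⟨a, b, rfl⟩)
    · exact isOpen_XBasic φ b
    · exact isOpen_XBasic φ b
    · by_cases hab : a = b
      · subst hab
        rw [idIso_preimage_GMapsTo_self]
        exact isOpen_XBasic _ _
      · rw [idIso_preimage_GMapsTo_ne hab]
        exact isOpen_empty
  · refine continuous_generateFrom_iff.mpr ?_
    rintro U ((⟨n, φ, b, rfl⟩ | ⟨n, φ, b, rfl⟩) | ⟨a, b, rfl⟩)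
    · exact isOpen_tgt_preimage φ b
    · exact isOpen_src_preimage φ b
    · rw [invIso_preimage_GMapsTo]
      exact isOpen_GMapsTo b a
  · refine continuous_generateFrom_iff.mpr ?_
    rintro U ((⟨n, φ, b, rfl⟩ | ⟨n, φ, b, rfl⟩) | ⟨a, b, rfl⟩)
    · exact (isOpen_src_preimage φ b).preimage (continuous_snd.comp htp)
    · exact (isOpen_tgt_preimage φ b).preimage (continuous_fst.comp htp)
    · rw [comp_preimage_GMapsTo]
      exact isOpen_iUnion fun x =>
        ((isOpen_GMapsTo x b).prod (isOpen_GMapsTo a x)).preimage htp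
end

section
/- For every L-formula φ with n free variables, the action θ_φ : G_T ×_{X_T} ⟦φ⟧ → ⟦φ⟧ is continuous; moreover the pair (π₁ : ⟦φ⟧ → X_T, θ_φ) is an equivariant sheaf on the topological groupoid G_T ⇉ X_T: π₁(θ_φ(f, p)) = t(f), θ_φ((M,M,id), p) = p, and θ_φ(g, θ_φ(f, p)) = θ_φ(g∘f, p) whenever defined. -/
open FirstOrder FirstOrder.Language Set Topology

universe u v w x

variable {L : FirstOrder.Language.{u, v}} {α : Type w}

theorem SmallModel.sat_congr {T : L.Theory} {M : SmallModel L α T} {ι : Type*}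
    {φ : L.Formula ι} {v w : ι → M.carrier} (h : ∀ i, (v i : α) = w i)
    (hv : M.Sat φ v) : M.Sat φ w := by
  have : v = w := funext fun i => Subtype.ext (h i)
  exact this ▸ hv

/-- **`(π₁ : ⟦φ⟧ → X_T, θ_φ)` is an equivariant sheaf on `G_T ⇉ X_T`**: the action
`θ_φ : G_T ×_{X_T} ⟦φ⟧ → ⟦φ⟧` is continuous, lies over the target map, preserves
identities and respects composition. -/
theorem theta_continuous_action {T : L.Theory} {n : ℕ} (φ : L.Formula (Fin n)) :
    Continuous (theta (α := α) (T := T) φ) ∧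
      (∀ q : ActionPt (α := α) T φ, (theta φ q).model = q.g.tgt) ∧
      (∀ p : SheafPt (α := α) T φ,
        theta φ ⟨ModelIso.idIso p.model, p.elem, p.sat⟩ = p) ∧
      (∀ (A B C : SmallModel L α T) (f : StrEquiv A B) (g : StrEquiv B C)
          (e : Fin n → A.carrier) (he : A.Sat φ e),
        theta φ ⟨⟨B, C, g⟩, (theta φ ⟨⟨A, B, f⟩, e, he⟩).elem,
            (theta φ ⟨⟨A, B, f⟩, e, he⟩).sat⟩ =
          theta φ ⟨⟨A, C, StrEquiv.comp g f⟩, e, he⟩) := by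
  refine ⟨?_, fun q => rfl, fun p => rfl, fun A B C f g e he => rfl⟩
  rw [continuous_generateFrom_iff]
  rintro U ⟨m, ψ, b, rfl⟩
  have key : theta (α := α) (T := T) φ ⁻¹' sheafBasic φ ψ b =
      ⋃ c : Fin m → α, (fun q : ActionPt (α := α) T φ => (q.g, q.pt)) ⁻¹'
        ((⋂ i, GMapsTo (T := T) (c i) (b i)) ×ˢ sheafBasic φ ψ c) := by
    ext q
    letI := q.g.src.struc
    letI := q.g.tgt.struc
    simp only [mem_preimage, mem_iUnion, mem_prod, mem_iInter]
    constructor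
    · rintro ⟨h, hs⟩
      refine ⟨fun i => (q.g.iso.symm ⟨b i, h i⟩ : α), fun i =>
        ⟨(q.g.iso.symm ⟨b i, h i⟩).2, ?_⟩, fun i => (q.g.iso.symm ⟨b i, h i⟩).2, ?_⟩
      · show ((q.g.iso (q.g.iso.symm ⟨b i, h i⟩) : q.g.tgt.carrier) : α) = b i
        rw [q.g.iso.apply_symm_apply]
      · have key : q.g.src.Sat ψ (Sum.elim q.elem fun i => q.g.iso.symm ⟨b i, h i⟩) := by
          apply (StrongHomClass.realize_formula q.g.iso ψ
            (v := Sum.elim q.elem fun i => q.g.iso.symm ⟨b i, h i⟩)).mp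
          have hc : (⇑q.g.iso ∘ Sum.elim q.elem fun i => q.g.iso.symm ⟨b i, h i⟩) =
              Sum.elim (fun i => StrEquiv.fn q.g.iso (q.elem i)) fun i => ⟨b i, h i⟩ := by
            funext x; cases x with
            | inl i => rfl
            | inr i =>
              show q.g.iso (q.g.iso.symm ⟨b i, h i⟩) = _
              rw [q.g.iso.apply_symm_apply]
              rfl
          show Formula.Realize (M := q.g.tgt.carrier) ψ _
          rw [hc]
          exact hs
        refine SmallModel.sat_congr (fun x => ?_) key
        cases x <;> rfl
    · rintro ⟨c, hg, hc, hs⟩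
      have hb : ∀ i, b i ∈ q.g.tgt.carrier := by
        intro i
        obtain ⟨h1, h2⟩ := hg i
        exact h2 ▸ (StrEquiv.fn q.g.iso ⟨c i, h1⟩).2
      refine ⟨hb, ?_⟩
      have key : q.g.tgt.Sat ψ (⇑q.g.iso ∘ Sum.elim q.elem fun i => ⟨c i, hc i⟩) := by
        show Formula.Realize (M := q.g.tgt.carrier) ψ _
        exact (StrongHomClass.realize_formula q.g.iso ψ).mpr hs
      refine SmallModel.sat_congr (fun x => ?_) key
      cases x with
      | inl i => rfl
      | inr i => exact (hg i).2
  rw [key]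
  refine isOpen_iUnion fun c => Continuous.isOpen_preimage continuous_induced_dom _ ?_
  refine IsOpen.prod (isOpen_iInter_of_finite fun i => ?_)
    (TopologicalSpace.isOpen_generateFrom_of_mem ⟨m, ψ, c, rfl⟩)
  exact TopologicalSpace.isOpen_generateFrom_of_mem (Or.inr ⟨c i, b i, rfl⟩)
end

section
/- Let φ be an L-formula with n free variables, ψ an L-formula with n+m free variables, and b⃗ ∈ αᵐ a tuple with bᵢ ≠ bⱼ for i ≠ j (reduced form). Let U = ⟨ψ, b⃗⟩ ⊆ ⟦φ⟧ be the corresponding basic open. Then the stabilization of U under the action θ_φ (the set of all θ_φ(f, p) with p ∈ U and f composable) equals the definable subset ⟦ξ⟧ ⊆ ⟦φ⟧, where ξ(x⃗) := ∃y⃗ (φ(x⃗) ∧ ψ(x⃗, y⃗) ∧ ⋀_{i≠j} yᵢ ≠ yⱼ). -/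
open FirstOrder FirstOrder.Language Set Topology

universe u v w x

variable {L : FirstOrder.Language.{u, v}} {α : Type w}

/-- The definable subset `⟦ξ⟧ ⊆ ⟦φ⟧` given by a formula `ξ`. -/
def defSub {T : L.Theory} {n : ℕ} (φ ξ : L.Formula (Fin n)) :
    Set (SheafPt (α := α) T φ) :=
  {p | p.model.Sat ξ p.elem}

/-- The stabilization of a subset `U ⊆ ⟦φ⟧` under the action `θ_φ`: the set of all
`θ_φ(f, p)` with `p ∈ U` and `f` a composable arrow of `G_T`. -/
def stab {T : L.Theory} {n : ℕ} (φ : L.Formula (Fin n)) (U : Set (SheafPt (α := α) T φ)) :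
    Set (SheafPt (α := α) T φ) :=
  {y | ∃ q : ActionPt (α := α) T φ, q.pt ∈ U ∧ theta φ q = y}

/-- The formula `⋀_{i ≠ j} yᵢ ≠ yⱼ` expressing that the last `m` of `n + m` variables are
pairwise distinct. -/
def distinctInr (L : FirstOrder.Language.{u, v}) (n m : ℕ) : L.Formula (Fin n ⊕ Fin m) :=
  ((List.finRange m) ×ˢ (List.finRange m)).foldr
    (fun p acc =>
      if p.1 = p.2 then acc
      else (∼(Term.equal (Term.var (Sum.inr p.1)) (Term.var (Sum.inr p.2)))) ⊓ acc) ⊤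

/-! The pairwise-distinctness conjunct says exactly that the witnesses are injective, so `⟦ξ⟧`
consists of the points `(M, a⃗)` admitting some injective `c⃗` with `M ⊨ ψ(a⃗, c⃗)`. Isomorphisms
preserve such points, giving `stab ⊆ ⟦ξ⟧`. Conversely, a permutation of `α` sending `c⃗` to `b⃗`
transports `M` to an isomorphic model `M'` in which `(M', a⃗') ∈ ⟨ψ, b⃗⟩`, and the inverse
isomorphism carries this point back to `(M, a⃗)`. -/

section Formulas

variable {M : Type x} [L.Structure M] {n m : ℕ}

lemma realize_foldr_distinctInr (l : List (Fin m × Fin m)) (v : Fin n ⊕ Fin m → M) :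
    Formula.Realize (M := M) (l.foldr (fun p acc =>
      if p.1 = p.2 then acc
      else (∼(Term.equal (Term.var (Sum.inr p.1)) (Term.var (Sum.inr p.2)))) ⊓ acc)
      (⊤ : L.Formula (Fin n ⊕ Fin m))) v ↔
      ∀ p ∈ l, p.1 ≠ p.2 → v (Sum.inr p.1) ≠ v (Sum.inr p.2) := by
  induction l with
  | nil => simp
  | cons p l ih =>
    simp only [List.foldr_cons, List.forall_mem_cons]
    split_ifs with h <;> simp [ih, h]

lemma realize_distinctInr (v : Fin n ⊕ Fin m → M) :
    (distinctInr L n m).Realize v ↔ Function.Injective (v ∘ Sum.inr) := by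
  rw [distinctInr, realize_foldr_distinctInr]
  refine ⟨fun h i j hij => ?_, fun h p _ hp hv => hp (h hv)⟩
  by_contra hne
  exact h (i, j) (by simp [List.mem_product]) hne hij

end Formulas

lemma StrEquiv.sat_comp_iff {T : L.Theory} {A B : SmallModel L α T} (f : StrEquiv A B)
    {ι : Type*} (φ : L.Formula ι) (v : ι → A.carrier) :
    B.Sat φ (f.fn ∘ v) ↔ A.Sat φ v :=
  letI := A.struc; letI := B.struc
  StrongHomClass.realize_formula f φ

lemma StrEquiv.fn_injective {T : L.Theory} {A B : SmallModel L α T} (f : StrEquiv A B) :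
    Function.Injective f.fn :=
  Equiv.injective _

section Transport

variable {T : L.Theory} (M : SmallModel L α T) (σ : Equiv.Perm α)

def SmallModel.transport : SmallModel L α T :=
  letI := M.struc
  haveI := M.models
  { carrier := σ '' M.carrier
    struc := Equiv.inducedStructure (σ.image M.carrier)
    models :=
      letI := Equiv.inducedStructure (L := L) (σ.image M.carrier)
      StrongHomClass.theory_model (Equiv.inducedStructureEquiv (σ.image M.carrier)) }

def SmallModel.transportIso : StrEquiv M (M.transport σ) :=
  letI := M.struc
  Equiv.inducedStructureEquiv (σ.image M.carrier)

end Transport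

section Action

variable {T : L.Theory} {n : ℕ} {φ : L.Formula (Fin n)}

lemma SheafPt.ext_val {p q : SheafPt (α := α) T φ} (hmodel : p.model = q.model)
    (helem : ∀ k, (p.elem k : α) = (q.elem k : α)) : p = q := by
  obtain ⟨M, a, _⟩ := p
  obtain ⟨_, _, _⟩ := q
  cases hmodel
  obtain rfl : a = _ := funext fun k => Subtype.ext (helem k)
  rfl

def ActionPt.inv (q : ActionPt (α := α) T φ) : ActionPt (α := α) T φ :=
  ⟨q.g.invIso, (theta φ q).elem, (theta φ q).sat⟩

lemma theta_inv (q : ActionPt (α := α) T φ) : theta φ q.inv = q.pt :=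
  SheafPt.ext_val rfl fun k =>
    letI := q.g.src.struc; letI := q.g.tgt.struc
    congrArg Subtype.val (q.g.iso.symm_apply_apply (q.elem k))

lemma pt_mem_stab_of_theta_mem {U : Set (SheafPt (α := α) T φ)} {q : ActionPt (α := α) T φ}
    (h : theta φ q ∈ U) : q.pt ∈ stab φ U :=
  ⟨q.inv, h, theta_inv q⟩

end Action

section Stabilization

variable {T : L.Theory} {n m : ℕ} {φ : L.Formula (Fin n)} {ψ : L.Formula (Fin n ⊕ Fin m)}

lemma mem_defSub_iExs_distinctInr_iff {p : SheafPt (α := α) T φ} :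
    p ∈ defSub φ (Formula.iExs (Fin m) (((φ.relabel Sum.inl) ⊓ ψ) ⊓ distinctInr L n m)) ↔
      ∃ c : Fin m → p.model.carrier,
        Function.Injective c ∧ p.model.Sat ψ (Sum.elim p.elem c) := by
  let _ := p.model.struc
  have hφ : p.model.Sat φ p.elem := p.sat
  simp only [defSub, SmallModel.Sat, Set.mem_ofPred_eq, Formula.realize_iExs,
    Formula.realize_inf, Formula.realize_relabel, realize_distinctInr] at hφ ⊢
  exact exists_congr fun c => by
    rw [Sum.elim_comp_inl, Sum.elim_comp_inr]
    tauto

lemma stab_sheafBasic_subset_defSub {b : Fin m → α} (hb : Function.Injective b) :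
    stab (α := α) (T := T) φ (sheafBasic φ ψ b) ⊆
      defSub φ (Formula.iExs (Fin m) (((φ.relabel Sum.inl) ⊓ ψ) ⊓ distinctInr L n m)) := by
  rintro _ ⟨q, ⟨hbmem, hψ⟩, rfl⟩
  refine mem_defSub_iExs_distinctInr_iff.2
    ⟨fun j => q.g.iso.fn ⟨b j, hbmem j⟩, ?_, ?_⟩
  · exact q.g.iso.fn_injective.comp fun i j hij => hb (congrArg Subtype.val hij)
  · have := (q.g.iso.sat_comp_iff ψ (Sum.elim q.elem fun j => ⟨b j, hbmem j⟩)).2 hψ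
    rwa [Sum.comp_elim] at this

lemma defSub_subset_stab_sheafBasic {b : Fin m → α} (hb : Function.Injective b) :
    defSub φ (Formula.iExs (Fin m) (((φ.relabel Sum.inl) ⊓ ψ) ⊓ distinctInr L n m)) ⊆
      stab (α := α) (T := T) φ (sheafBasic φ ψ b) := by
  intro p hp
  obtain ⟨c, hc, hψ⟩ := mem_defSub_iExs_distinctInr_iff.1 hp
  obtain ⟨σ, hσ⟩ :=
    Equiv.Perm.exists_extending_pair _ b (Subtype.val_injective.comp hc) hb
  let q : ActionPt (α := α) T φ :=
    ⟨⟨p.model, p.model.transport σ, p.model.transportIso σ⟩, p.elem, p.sat⟩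
  have hbmem : ∀ j, b j ∈ (p.model.transport σ).carrier := fun j =>
    hσ j ▸ Set.mem_image_of_mem σ (c j).2
  have hb_eq : (fun j => ⟨b j, hbmem j⟩) = (p.model.transportIso σ).fn ∘ c :=
    funext fun j => Subtype.ext (hσ j).symm
  have hψ' := ((p.model.transportIso σ).sat_comp_iff ψ (Sum.elim p.elem c)).2 hψ
  rw [Sum.comp_elim, ← hb_eq] at hψ'
  exact pt_mem_stab_of_theta_mem (q := q) ⟨hbmem, hψ'⟩

end Stabilization

/-- **The stabilization of a basic open is definable**: for a basic open
`U = ⟨ψ, b⃗⟩ ⊆ ⟦φ⟧` in reduced form, the closure of `U` under the action `θ_φ` is the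
definable subset `⟦ξ⟧` for `ξ(x⃗) := ∃y⃗ (φ(x⃗) ∧ ψ(x⃗,y⃗) ∧ ⋀_{i≠j} yᵢ ≠ yⱼ)`. -/
theorem stab_sheafBasic_eq_defSub {T : L.Theory} {n m : ℕ} (φ : L.Formula (Fin n))
    (ψ : L.Formula (Fin n ⊕ Fin m)) (b : Fin m → α) (hb : Function.Injective b) :
    stab (α := α) (T := T) φ (sheafBasic φ ψ b) =
      defSub (α := α) φ
        (Formula.iExs (Fin m) (((φ.relabel Sum.inl) ⊓ ψ) ⊓ distinctInr L n m)) :=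
  (stab_sheafBasic_subset_defSub hb).antisymm (defSub_subset_stab_sheafBasic hb)
end

section
/- Let φ be an L-formula with n free variables. Every open subset of ⟦φ⟧ that is stable under the action θ_φ is a union of definable subsets, i.e. a union of sets of the form ⟦ξ⟧ for L-formulas ξ with n free variables such that every M ∈ X_T satisfies ∀x⃗ (ξ(x⃗) → φ(x⃗)). -/
open FirstOrder FirstOrder.Language Set Topology

universe u v w x

variable {L : FirstOrder.Language.{u, v}} {α : Type w}

/-!
Open subsets of `⟦φ⟧` have the sets `⟨ψ, b⃗⟩` as a basis, since these are closed under finite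
intersections. A `θ_φ`-stable open `U` is also invariant (apply stability to inverse arrows), so
together with a basic open `⟨ψ, b⃗⟩ ⊆ U` it contains the whole orbit of `⟨ψ, b⃗⟩`. That orbit is
definable, by `φ(x⃗) ∧ ∃ y⃗, ψ(x⃗, y⃗) ∧ (y⃗ has the equality type of b⃗)`: a permutation of `α`
sending such witnesses `y⃗` to `b⃗` transports the model to an isomorphic small model in which
they become `b⃗`.
-/

lemma exists_perm_apply_eq {ι : Type*} [Finite ι] {a b : ι → α}
    (hab : ∀ j k, a j = a k ↔ b j = b k) : ∃ σ : Equiv.Perm α, ∀ j, σ (a j) = b j := by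
  let f : Set.range a ↪ α := ⟨fun x => b (Set.rangeSplitting a x), fun x y hxy =>
    Subtype.ext <| by
      rw [← Set.apply_rangeSplitting a x, ← Set.apply_rangeSplitting a y]
      exact (hab _ _).mpr hxy⟩
  obtain ⟨σ, hσ⟩ : ∃ σ : α ≃ α, ∀ x : Set.range a, σ x = f x := by
    cases finite_or_infinite α
    · exact Cardinal.extend_function_finite f ⟨Equiv.refl α⟩
    · exact Cardinal.extend_function_of_lt f
        ((Set.finite_range a).lt_aleph0.trans_le (Cardinal.aleph0_le_mk α)) ⟨Equiv.refl α⟩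
  refine ⟨σ, fun j => ?_⟩
  rw [hσ ⟨a j, j, rfl⟩]
  exact (hab _ _).mp (Set.apply_rangeSplitting a ⟨a j, j, rfl⟩)

namespace SmallModel

variable {T : L.Theory}

def transport_s10 (N : SmallModel L α T) (σ : Equiv.Perm α) : SmallModel L α T :=
  letI := N.struc
  letI := (σ.image N.carrier).inducedStructure (L := L)
  haveI := N.models
  { carrier := σ '' N.carrier
    struc := (σ.image N.carrier).inducedStructure (L := L)
    models := StrongHomClass.theory_model (σ.image N.carrier).inducedStructureEquiv (L := L) }

def transportIso_s10 (N : SmallModel L α T) (σ : Equiv.Perm α) : StrEquiv N (N.transport_s10 σ) :=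
  letI := N.struc
  (σ.image N.carrier).inducedStructureEquiv (L := L)

end SmallModel

noncomputable def equalityDiagram {m : ℕ} (b : Fin m → α) : L.Formula (Fin m) := by
  classical
  exact Formula.iInf fun jk : Fin m × Fin m =>
    if b jk.1 = b jk.2 then Term.equal (var jk.1) (var jk.2)
    else ∼(Term.equal (var jk.1) (var jk.2))

lemma realize_equalityDiagram {M : Type*} [L.Structure M] {m : ℕ} {b : Fin m → α}
    {w : Fin m → M} :
    (equalityDiagram (L := L) b).Realize w ↔ ∀ j k, w j = w k ↔ b j = b k := by
  classical
  simp only [equalityDiagram, Formula.realize_iInf, Prod.forall]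
  refine forall₂_congr fun j k => ?_
  split_ifs with h <;> simp [h]

noncomputable def orbitFormula {n m : ℕ} (φ : L.Formula (Fin n))
    (ψ : L.Formula (Fin n ⊕ Fin m)) (b : Fin m → α) : L.Formula (Fin n) :=
  φ ⊓ Formula.iExs (Fin m) (ψ ⊓ (equalityDiagram b).relabel Sum.inr)

lemma realize_orbitFormula {M : Type*} [L.Structure M] {n m : ℕ} {φ : L.Formula (Fin n)}
    {ψ : L.Formula (Fin n ⊕ Fin m)} {b : Fin m → α} {v : Fin n → M} :
    (orbitFormula φ ψ b).Realize v ↔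
      φ.Realize v ∧ ∃ w : Fin m → M, ψ.Realize (Sum.elim v w) ∧ ∀ j k, w j = w k ↔ b j = b k := by
  simp only [orbitFormula, Formula.realize_inf, Formula.realize_iExs, Formula.realize_relabel,
    Sum.elim_comp_inr, realize_equalityDiagram]

section

variable {T : L.Theory} {n : ℕ}

lemma sheafBasic_top (φ : L.Formula (Fin n)) :
    sheafBasic (T := T) φ ⊤ (finZeroElim : Fin 0 → α) = univ :=
  eq_univ_of_forall fun p =>
    ⟨finZeroElim, by let := p.model.struc; exact Formula.realize_top.2 trivial⟩

lemma sheafBasic_inf_relabel (φ : L.Formula (Fin n)) {m₁ m₂ : ℕ}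
    (ψ₁ : L.Formula (Fin n ⊕ Fin m₁)) (ψ₂ : L.Formula (Fin n ⊕ Fin m₂))
    (b₁ : Fin m₁ → α) (b₂ : Fin m₂ → α) :
    sheafBasic (T := T) φ
      (ψ₁.relabel (Sum.map id (Fin.castAdd m₂)) ⊓ ψ₂.relabel (Sum.map id (Fin.natAdd m₁)))
      (Fin.append b₁ b₂)
    = sheafBasic φ ψ₁ b₁ ∩ sheafBasic φ ψ₂ b₂ := by
  ext p
  let := p.model.struc
  simp only [sheafBasic, SmallModel.Sat, mem_ofPred_eq, mem_inter_iff, Formula.realize_inf,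
    Formula.realize_relabel, Sum.elim_comp_map, Function.comp_id, Fin.forall_fin_add]
  simp only [Function.comp_def, Fin.append_left, Fin.append_right]
  exact ⟨fun ⟨⟨h₁, h₂⟩, hψ₁, hψ₂⟩ => ⟨⟨h₁, hψ₁⟩, h₂, hψ₂⟩,
    fun ⟨⟨h₁, hψ₁⟩, h₂, hψ₂⟩ => ⟨⟨h₁, h₂⟩, hψ₁, hψ₂⟩⟩

lemma isTopologicalBasis_sheafBasic (φ : L.Formula (Fin n)) :
    TopologicalSpace.IsTopologicalBasis
      {U : Set (SheafPt (α := α) T φ) |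
        ∃ (m : ℕ) (ψ : L.Formula (Fin n ⊕ Fin m)) (b : Fin m → α), U = sheafBasic φ ψ b} := by
  refine TopologicalSpace.isTopologicalBasis_of_subbasis_of_finiteInter rfl
    ⟨⟨0, ⊤, finZeroElim, (sheafBasic_top φ).symm⟩, ?_⟩
  rintro _ ⟨m₁, ψ₁, b₁, rfl⟩ _ ⟨m₂, ψ₂, b₂, rfl⟩
  exact ⟨_, _, _, (sheafBasic_inf_relabel φ ψ₁ ψ₂ b₁ b₂).symm⟩

def ActionPt.symm {φ : L.Formula (Fin n)} (q : ActionPt (α := α) T φ) :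
    ActionPt (α := α) T φ :=
  ⟨q.g.invIso, (theta φ q).elem, (theta φ q).sat⟩

lemma ActionPt.pt_symm {φ : L.Formula (Fin n)} (q : ActionPt (α := α) T φ) :
    q.symm.pt = theta φ q :=
  rfl

lemma ActionPt.theta_symm {φ : L.Formula (Fin n)} (q : ActionPt (α := α) T φ) :
    theta φ q.symm = q.pt := by
  let := q.g.src.struc
  let := q.g.tgt.struc
  simp only [theta, ActionPt.symm, ActionPt.pt, ModelIso.invIso, StrEquiv.fn]
  congr 1
  funext i
  exact q.g.iso.symm_apply_apply (q.elem i)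

lemma mem_of_theta_mem {φ : L.Formula (Fin n)} {U : Set (SheafPt (α := α) T φ)}
    (hstable : ∀ q : ActionPt (α := α) T φ, q.pt ∈ U → theta φ q ∈ U)
    (q : ActionPt (α := α) T φ) (h : theta φ q ∈ U) : q.pt ∈ U :=
  q.theta_symm ▸ hstable q.symm (q.pt_symm ▸ h)

lemma sheafBasic_subset_defSub_orbitFormula (φ : L.Formula (Fin n)) {m : ℕ}
    (ψ : L.Formula (Fin n ⊕ Fin m)) (b : Fin m → α) :
    sheafBasic (T := T) φ ψ b ⊆ defSub φ (orbitFormula φ ψ b) := by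
  rintro p ⟨hb, hψ⟩
  let := p.model.struc
  exact realize_orbitFormula.2 ⟨p.sat, _, hψ, fun j k => Subtype.ext_iff⟩

lemma defSub_orbitFormula_subset {φ : L.Formula (Fin n)} {U : Set (SheafPt (α := α) T φ)}
    (hstable : ∀ q : ActionPt (α := α) T φ, q.pt ∈ U → theta φ q ∈ U) {m : ℕ}
    {ψ : L.Formula (Fin n ⊕ Fin m)} {b : Fin m → α} (hsub : sheafBasic φ ψ b ⊆ U) :
    defSub φ (orbitFormula φ ψ b) ⊆ U := by
  rintro ⟨N, d, hd⟩ hp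
  let := N.struc
  obtain ⟨-, w, hψ, hw⟩ := realize_orbitFormula.1 hp
  obtain ⟨σ, hσ⟩ := exists_perm_apply_eq (a := fun j => (w j : α)) (b := b)
    fun j k => Subtype.ext_iff.symm.trans (hw j k)
  let q : ActionPt (α := α) T φ := ⟨⟨N, N.transport_s10 σ, N.transportIso_s10 σ⟩, d, hd⟩
  refine mem_of_theta_mem hstable q (hsub ?_)
  have hb : ∀ j, b j ∈ (N.transport_s10 σ).carrier := fun j => hσ j ▸ ⟨w j, (w j).2, rfl⟩
  have hval : Sum.elim (theta φ q).elem (fun j => ⟨b j, hb j⟩) =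
      N.transportIso_s10 σ ∘ Sum.elim d w := by
    funext i
    rcases i with i | j
    · rfl
    · exact Subtype.ext (hσ j).symm
  let := (N.transport_s10 σ).struc
  refine ⟨hb, ?_⟩
  rw [SmallModel.Sat, hval]
  exact (StrongHomClass.realize_formula (N.transportIso_s10 σ) ψ).2 hψ

end

/-- **Stable opens are unions of definable subsets**: every open subset of `⟦φ⟧` that is
stable under the action `θ_φ` is a union of definable subsets `⟦ξ⟧`. -/
theorem stable_open_iUnion_defSub {T : L.Theory} {n : ℕ} (φ : L.Formula (Fin n))
    (U : Set (SheafPt (α := α) T φ)) (hU : IsOpen U)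
    (hstable : ∀ q : ActionPt (α := α) T φ, q.pt ∈ U → theta φ q ∈ U) :
    ∃ s : Set (L.Formula (Fin n)),
      (∀ ξ ∈ s, ∀ (M : SmallModel L α T) (v : Fin n → M.carrier), M.Sat ξ v → M.Sat φ v) ∧
      U = ⋃ ξ ∈ s, defSub (α := α) φ ξ := by
  refine ⟨{ξ | (∀ (M : SmallModel L α T) (v : Fin n → M.carrier), M.Sat ξ v → M.Sat φ v) ∧
      defSub φ ξ ⊆ U}, fun ξ hξ => hξ.1, ?_⟩
  refine Subset.antisymm (fun p hp => ?_) (iUnion₂_subset fun ξ hξ => hξ.2)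
  obtain ⟨_, ⟨m, ψ, b, rfl⟩, hpV, hVU⟩ :=
    (isTopologicalBasis_sheafBasic φ).exists_subset_of_mem_open hp hU
  have hφ : ∀ (M : SmallModel L α T) (v : Fin n → M.carrier),
      M.Sat (orbitFormula φ ψ b) v → M.Sat φ v :=
    fun M v hv => by let := M.struc; exact (realize_orbitFormula.1 hv).1
  exact mem_iUnion₂.2 ⟨_, ⟨hφ, defSub_orbitFormula_subset hstable hVU⟩,
    sheafBasic_subset_defSub_orbitFormula φ ψ b hpV⟩
end

section
/- Let ⟨φ, a⃗⟩ ⊆ X_T be a basic open set in reduced form (aᵢ ≠ aⱼ for i ≠ j), and let ξ(x⃗) := φ(x⃗) ∧ ⋀_{i≠j} xᵢ ≠ xⱼ. Then the map v : ⟨φ, a⃗⟩ → ⟦ξ⟧ defined by v(M) = (M, a⃗) is a continuous section of π₁ : ⟦ξ⟧ → X_T with open image, and the stabilization of v(⟨φ, a⃗⟩) under the action θ_ξ is all of ⟦ξ⟧. -/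
open FirstOrder FirstOrder.Language Set Topology

universe u v w x

variable {L : FirstOrder.Language.{u, v}} {α : Type w}

/-- The formula `⋀_{i ≠ j} xᵢ ≠ xⱼ` expressing that the `n` free variables are pairwise
distinct. -/
def distinctFree (L : FirstOrder.Language.{u, v}) (n : ℕ) : L.Formula (Fin n) :=
  ((List.finRange n) ×ˢ (List.finRange n)).foldr
    (fun p acc =>
      if p.1 = p.2 then acc
      else (∼(Term.equal (Term.var p.1) (Term.var p.2))) ⊓ acc) ⊤

section Aux

lemma distinctFree_aux {M : Type*} [L.Structure M] {n : ℕ} (l : List (Fin n × Fin n))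
    (v : Fin n → M) :
    Formula.Realize (M := M) (l.foldr (fun p acc =>
        if p.1 = p.2 then acc
        else (∼(Term.equal (Term.var p.1) (Term.var p.2))) ⊓ acc)
        (⊤ : L.Formula (Fin n))) v ↔
      ∀ p ∈ l, p.1 ≠ p.2 → v p.1 ≠ v p.2 := by
  induction l with
  | nil => simp
  | cons x xs ih =>
    by_cases h : x.1 = x.2
    · simp [h, ih]
    · simp [h, ih, Formula.realize_inf, Formula.realize_not, Formula.realize_equal]

lemma realize_distinctFree {M : Type*} [L.Structure M] {n : ℕ} (v : Fin n → M) :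
    (distinctFree L n).Realize v ↔ Function.Injective v := by
  rw [distinctFree, distinctFree_aux]
  constructor
  · intro h i j hij
    by_contra hne
    exact h (i, j) (List.mem_product.2 ⟨List.mem_finRange i, List.mem_finRange j⟩) hne hij
  · rintro h ⟨i, j⟩ - hij hv
    exact hij (h hv)

/-- The formula `⋀ i, xᵢ = yᵢ` comparing two tuples of `n` free variables. -/
def eqTupleFormula (L : FirstOrder.Language.{u, v}) (n : ℕ) : L.Formula (Fin n ⊕ Fin n) :=
  (List.finRange n).foldr
    (fun i acc => (Term.equal (Term.var (Sum.inl i)) (Term.var (Sum.inr i))) ⊓ acc) ⊤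

lemma eqTuple_aux {M : Type*} [L.Structure M] {n : ℕ} (l : List (Fin n))
    (v : Fin n ⊕ Fin n → M) :
    Formula.Realize (M := M) (l.foldr (fun i acc =>
        (Term.equal (Term.var (Sum.inl i)) (Term.var (Sum.inr i))) ⊓ acc)
        (⊤ : L.Formula (Fin n ⊕ Fin n))) v ↔
      ∀ i ∈ l, v (Sum.inl i) = v (Sum.inr i) := by
  induction l with
  | nil => simp
  | cons x xs ih => simp [ih, Formula.realize_inf, Formula.realize_equal]

lemma realize_eqTupleFormula {M : Type*} [L.Structure M] {n : ℕ} (v : Fin n ⊕ Fin n → M) :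
    (eqTupleFormula L n).Realize v ↔ ∀ i, v (Sum.inl i) = v (Sum.inr i) := by
  rw [eqTupleFormula, eqTuple_aux]
  simp [List.mem_finRange]

lemma SheafPt.ext' {T : L.Theory} {n : ℕ} {φ : L.Formula (Fin n)} :
    ∀ {p q : SheafPt (α := α) T φ}, p.model = q.model →
      (∀ i, (p.elem i : α) = (q.elem i : α)) → p = q
  | ⟨Mp, ep, sp⟩, ⟨Mq, eq', sq⟩, h1, h2 => by
    dsimp at h1 h2
    subst h1
    have : ep = eq' := funext fun i => Subtype.ext (h2 i)
    subst this
    rfl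

lemma exists_perm {n : ℕ} {c b : Fin n → α} (hc : Function.Injective c)
    (hb : Function.Injective b) : ∃ σ : Equiv.Perm α, ∀ i, σ (c i) = b i := by
  classical
  set u : Set α := Set.range c ∪ Set.range b with hu
  haveI : Fintype ↥u := ((Set.finite_range c).union (Set.finite_range b)).fintype
  let p : ↥u → Prop := fun x => (x : α) ∈ Set.range c
  let q : ↥u → Prop := fun x => (x : α) ∈ Set.range b
  let fc : Fin n → {x : ↥u // p x} := fun i => ⟨⟨c i, Or.inl ⟨i, rfl⟩⟩, ⟨i, rfl⟩⟩
  let fb : Fin n → {x : ↥u // q x} := fun i => ⟨⟨b i, Or.inr ⟨i, rfl⟩⟩, ⟨i, rfl⟩⟩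
  have hfc : Function.Bijective fc :=
    ⟨fun i j h => hc (congrArg (fun x => (x.1 : α)) h),
     fun x => by obtain ⟨i, hi⟩ := x.2; exact ⟨i, Subtype.ext (Subtype.ext hi)⟩⟩
  have hfb : Function.Bijective fb :=
    ⟨fun i j h => hb (congrArg (fun x => (x.1 : α)) h),
     fun x => by obtain ⟨i, hi⟩ := x.2; exact ⟨i, Subtype.ext (Subtype.ext hi)⟩⟩
  let e : {x : ↥u // p x} ≃ {x : ↥u // q x} :=
    (Equiv.ofBijective fc hfc).symm.trans (Equiv.ofBijective fb hfb)
  refine ⟨(e.extendSubtype).extendDomain (Equiv.refl ↥u), fun i => ?_⟩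
  have hcu : c i ∈ u := Or.inl ⟨i, rfl⟩
  rw [Equiv.Perm.extendDomain_apply_subtype _ _ hcu]
  have hp : p ((Equiv.refl ↥u).symm ⟨c i, hcu⟩) := ⟨i, rfl⟩
  rw [Equiv.extendSubtype_apply_of_mem e _ hp]
  have h1 : (Equiv.ofBijective fc hfc).symm ⟨(Equiv.refl ↥u).symm ⟨c i, hcu⟩, hp⟩ = i := by
    rw [Equiv.symm_apply_eq]
    exact Subtype.ext (Subtype.ext rfl)
  show ((e ⟨(Equiv.refl ↥u).symm ⟨c i, hcu⟩, hp⟩ : {x : ↥u // q x}) : α) = b i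
  simp only [e, Equiv.trans_apply, h1]
  rfl

/-- Transport of a small model along a permutation of `α`. -/
noncomputable def moveModel {T : L.Theory} (M : SmallModel L α T) (σ : Equiv.Perm α) :
    SmallModel L α T where
  carrier := σ '' M.carrier
  struc := letI := M.struc; Equiv.inducedStructure (L := L) (σ.image M.carrier)
  models := by
    letI := M.struc
    letI : L.Structure ↥(σ '' M.carrier) := Equiv.inducedStructure (σ.image M.carrier)
    haveI := M.models
    exact StrongHomClass.theory_model (Equiv.inducedStructureEquiv (σ.image M.carrier))

/-- The canonical section over a basic open of `X_T`. -/
noncomputable def baseSec {T : L.Theory} {n : ℕ} (φ : L.Formula (Fin n)) (a : Fin n → α)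
    (ha : Function.Injective a) (M : ↥(XBasic (T := T) φ a)) :
    SheafPt (α := α) T (φ ⊓ distinctFree L n) where
  model := M.1
  elem := fun i => ⟨a i, M.2.choose i⟩
  sat := by
    letI := M.1.struc
    refine Formula.realize_inf.2 ⟨M.2.choose_spec, (realize_distinctFree _).2 ?_⟩
    intro i j h
    exact ha (congrArg Subtype.val h)

end Aux

/-- **Basic opens of `X_T` generate the definable sheaves**: for a basic open `⟨φ, a⃗⟩` in
reduced form and `ξ := φ ∧ ⋀_{i≠j} xᵢ ≠ xⱼ`, the map `v : M ↦ (M, a⃗)` is a continuous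
section of `π₁ : ⟦ξ⟧ → X_T` with open image, whose image has all of `⟦ξ⟧` as its
stabilization under `θ_ξ`. -/
theorem basic_section_stabilizes {T : L.Theory} {n : ℕ} (φ : L.Formula (Fin n))
    (a : Fin n → α) (ha : Function.Injective a) :
    ∃ v : ↥(XBasic (T := T) φ a) → SheafPt (α := α) T (φ ⊓ distinctFree L n),
      (∀ M : ↥(XBasic (T := T) φ a),
        (v M).model = ↑M ∧ ∀ i, ((v M).elem i : α) = a i) ∧
      Continuous v ∧ IsOpen (Set.range v) ∧
      stab (φ ⊓ distinctFree L n) (Set.range v) = Set.univ := by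
  classical
  refine ⟨baseSec φ a ha, fun M => ⟨rfl, fun i => rfl⟩, ?_, ?_, ?_⟩
  · -- continuity
    apply continuous_generateFrom_iff.mpr
    rintro U ⟨m, ψ, b, rfl⟩
    have hpre : baseSec φ a ha ⁻¹' sheafBasic (φ ⊓ distinctFree L n) ψ b
        = Subtype.val ⁻¹' (XBasic (T := T) (ψ.relabel ⇑finSumFinEquiv)
            (Sum.elim a b ∘ ⇑finSumFinEquiv.symm)) := by
      ext M
      have key : ∀ (h' : ∀ j, (Sum.elim a b ∘ ⇑finSumFinEquiv.symm) j ∈ M.1.carrier)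
          (h : ∀ i, b i ∈ M.1.carrier),
          ((fun j => (⟨(Sum.elim a b ∘ ⇑finSumFinEquiv.symm) j, h' j⟩ : M.1.carrier))
              ∘ ⇑finSumFinEquiv)
            = Sum.elim (baseSec φ a ha M).elem (fun i => ⟨b i, h i⟩) := by
        intro h' h
        funext s
        cases s with
        | inl i => exact Subtype.ext (by simp [baseSec])
        | inr i => exact Subtype.ext (by simp)
      constructor
      · rintro ⟨h, hs⟩
        have h' : ∀ j, (Sum.elim a b ∘ ⇑finSumFinEquiv.symm) j ∈ M.1.carrier := by
          intro j
          rcases hj : finSumFinEquiv.symm j with i | i <;>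
            simp only [Function.comp_apply, hj, Sum.elim_inl, Sum.elim_inr]
          · exact M.2.choose i
          · exact h i
        refine ⟨h', ?_⟩
        letI := M.1.struc
        show Formula.Realize _ _
        rw [Formula.realize_relabel, key h' h]
        exact hs
      · rintro ⟨h', hs⟩
        have h : ∀ i, b i ∈ M.1.carrier := fun i => by
          have := h' (finSumFinEquiv (Sum.inr i))
          simpa using this
        refine ⟨h, ?_⟩
        letI := M.1.struc
        have hs' : Formula.Realize ψ
            ((fun j => (⟨(Sum.elim a b ∘ ⇑finSumFinEquiv.symm) j, h' j⟩ : M.1.carrier))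
              ∘ ⇑finSumFinEquiv) := by
          rw [← Formula.realize_relabel]
          exact hs
        rw [key h' h] at hs'
        exact hs'
    rw [hpre]
    have hgen : XBasic (T := T) (ψ.relabel ⇑finSumFinEquiv) (Sum.elim a b ∘ ⇑finSumFinEquiv.symm)
        ∈ {U : Set (SmallModel L α T) |
            ∃ (k : ℕ) (χ : L.Formula (Fin k)) (c : Fin k → α), U = XBasic χ c} :=
      ⟨n + m, _, _, rfl⟩
    exact (TopologicalSpace.isOpen_generateFrom_of_mem hgen).preimage continuous_subtype_val
  · -- open image
    have hrange : Set.range (baseSec (T := T) φ a ha)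
        = sheafBasic (T := T) (φ ⊓ distinctFree L n) (eqTupleFormula L n) a := by
      ext p
      constructor
      · rintro ⟨M, rfl⟩
        simp only [sheafBasic, Set.mem_setOf_eq]
        refine ⟨fun i => M.2.choose i, ?_⟩
        letI := (baseSec (T := T) φ a ha M).model.struc
        show Formula.Realize _ _
        rw [realize_eqTupleFormula]
        intro i
        exact Subtype.ext rfl
      · rintro ⟨h, hs⟩
        letI := p.model.struc
        have hv : ∀ i, p.elem i = ⟨a i, h i⟩ := (realize_eqTupleFormula _).1 hs
        have hM : p.model ∈ XBasic (T := T) φ a := by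
          refine ⟨h, ?_⟩
          have hφ : Formula.Realize φ p.elem := (Formula.realize_inf.1 p.sat).1
          have he : p.elem = fun i => ⟨a i, h i⟩ := funext hv
          rw [he] at hφ
          exact hφ
        exact ⟨⟨p.model, hM⟩, SheafPt.ext' rfl fun i => (congrArg Subtype.val (hv i)).symm⟩
    rw [hrange]
    exact TopologicalSpace.isOpen_generateFrom_of_mem ⟨n, eqTupleFormula L n, a, rfl⟩
  · -- stabilization
    apply Set.eq_univ_iff_forall.2
    intro p
    letI := p.model.struc
    have hinj : Function.Injective fun i => (p.elem i : α) := by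
      have hd := (realize_distinctFree _).1 (Formula.realize_inf.1 p.sat).2
      intro i j hij
      exact hd (Subtype.ext hij)
    obtain ⟨σ, hσ⟩ := exists_perm hinj ha
    letI : L.Structure ↥(σ '' p.model.carrier) := Equiv.inducedStructure (σ.image p.model.carrier)
    set N : SmallModel L α T := moveModel p.model σ with hN
    let e : p.model.carrier ≃ ↥(σ '' p.model.carrier) := σ.image p.model.carrier
    let g : ModelIso L α T :=
      ⟨N, p.model, (Equiv.inducedStructureEquiv (L := L) (σ.image p.model.carrier)).symm⟩
    have qsat : Formula.Realize (M := ↥(σ '' p.model.carrier)) (φ ⊓ distinctFree L n)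
        (fun i => e (p.elem i)) :=
      (StrongHomClass.realize_formula
        (Equiv.inducedStructureEquiv (L := L) (σ.image p.model.carrier)) _).mpr p.sat
    refine ⟨⟨g, fun i => e (p.elem i), qsat⟩, ?_, ?_⟩
    · -- the point lies in the image of the section
      have hmem : ∀ i, a i ∈ N.carrier := fun i => ⟨(p.elem i : α), (p.elem i).2, hσ i⟩
      have hNX : N ∈ XBasic (T := T) φ a := by
        refine ⟨hmem, ?_⟩
        have hφ := (Formula.realize_inf.1 qsat).1
        have he : (fun i => e (p.elem i))
            = fun i => (⟨a i, hmem i⟩ : ↥(σ '' p.model.carrier)) :=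
          funext fun i => Subtype.ext (hσ i)
        rw [he] at hφ
        exact hφ
      exact ⟨⟨N, hNX⟩, SheafPt.ext' rfl fun i => (hσ i).symm⟩
    · -- the action sends it to `p`
      refine SheafPt.ext' rfl fun i => ?_
      show (↑(StrEquiv.fn g.iso (e (p.elem i))) : α) = ↑(p.elem i)
      have : StrEquiv.fn g.iso (e (p.elem i)) = e.symm (e (p.elem i)) := rfl
      rw [this, Equiv.symm_apply_apply]
end
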